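/- arXiv:0909.1466 — 5 statements merged into one kernel-verified Lean document; each statement's English description precedes it below -/
import Mathlib

section
/- For any function φ : {0,1}^n → ℂ, any index i ∈ [n], and any subset S ⊆ {0,1}^{n-1}, the controlled bit-flip operator E_{i,S} (which maps |x⟩ to |x ⊕ e_i⟩ if the string x with its i-th bit deleted lies in S, and fixes |x⟩ otherwise) satisfies |⟨φ, E_{i,S} φ⟩ − ⟨φ,φ⟩| ≤ 2^{n−1}·I_i(φ), where I_i(φ) = E_{x∈{0,1}^n} |φ(x) − φ(x ⊕ e_i)|². -/
/-!
Only the strings `x ∈ S` contribute to `⟨φ, E φ⟩ - ⟨φ, φ⟩`, each with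
`conj (φ x) * (φ (x ⊕ eᵢ) - φ x)`. Since `S` is closed under flipping bit `i`, pairing `x` with
`x ⊕ eᵢ` turns this sum into `-½ ∑_{x ∈ S} |φ x - φ (x ⊕ eᵢ)|²`, whose absolute value is at most
half of the same sum over all of `{0,1}^n`, which is `2^{n-1} I_i(φ)`.
-/

open scoped BigOperators
open Complex

/-- Strings in `{0,1}^n`. -/
abbrev Bn (n : ℕ) := Fin n → Bool

/-- Hermitian inner product `⟨h,g⟩ = ∑ x, h(x)* g(x)` on functions `{0,1}^n → ℂ`. -/
noncomputable def ip {n : ℕ} (h g : Bn n → ℂ) : ℂ :=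
  ∑ x : Bn n, (starRingEnd ℂ) (h x) * g x

/-- Flip the `i`-th bit of `x`. -/
def bflip {n : ℕ} (i : Fin n) (x : Bn n) : Bn n := Function.update x i (!x i)

/-- Controlled bit flip `E_{i,S}`. The control set `S ⊆ {0,1}^{n-1}` is encoded as an
`i`-invariant set of full strings (membership not depending on bit `i`). -/
def ctrlX {n : ℕ} (i : Fin n) (S : Finset (Bn n)) (g : Bn n → ℂ) : Bn n → ℂ :=
  fun x => if x ∈ S then g (bflip i x) else g x

/-- `E_{i,{j}}`: flip bit `i` exactly when all other coordinates agree with `q`. -/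
def ctrlXpt {n : ℕ} (i : Fin n) (q : Bn n) (g : Bn n → ℂ) : Bn n → ℂ :=
  fun x => if ∀ j, j ≠ i → x j = q j then g (bflip i x) else g x

/-- Influence `I_i(φ) = E_x |φ(x) - φ(x ⊕ e_i)|²`. -/
noncomputable def infl {n : ℕ} (i : Fin n) (φ : Bn n → ℂ) : ℝ :=
  (∑ x : Bn n, ‖φ x - φ (bflip i x)‖ ^ 2) / 2 ^ n


theorem bflip_involutive {n : ℕ} (i : Fin n) : Function.Involutive (bflip i) := by
  intro x
  funext j
  by_cases h : j = i
  · subst h; simp [bflip]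
  · simp [bflip, Function.update_of_ne h]

theorem conj_mul_sub_add_conj_mul_sub (a b : ℂ) :
    (starRingEnd ℂ) a * (b - a) + (starRingEnd ℂ) b * (a - b) = -((‖a - b‖ ^ 2 : ℝ) : ℂ) := by
  push_cast
  rw [← Complex.mul_conj', map_sub]
  ring

theorem sum_conj_mul_sub_comp_involution {α : Type*} {σ : α → α} (hσ : Function.Involutive σ)
    {S : Finset α} (hS : ∀ x, σ x ∈ S ↔ x ∈ S) (φ : α → ℂ) :
    ∑ x ∈ S, (starRingEnd ℂ) (φ x) * (φ (σ x) - φ x)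
      = -(((∑ x ∈ S, ‖φ x - φ (σ x)‖ ^ 2) / 2 : ℝ) : ℂ) := by
  set F : α → ℂ := fun x => (starRingEnd ℂ) (φ x) * (φ (σ x) - φ x)
  have reindex : ∑ x ∈ S, F x = ∑ x ∈ S, F (σ x) :=
    Finset.sum_nbij' σ σ (fun x hx => (hS x).2 hx) (fun x hx => (hS x).2 hx)
      (fun x _ => hσ x) (fun x _ => hσ x) (fun x _ => by rw [hσ x])
  have pair_sum : 2 * ∑ x ∈ S, F x = -((∑ x ∈ S, ‖φ x - φ (σ x)‖ ^ 2 : ℝ) : ℂ) := by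
    rw [two_mul]
    nth_rewrite 2 [reindex]
    rw [← Finset.sum_add_distrib, Complex.ofReal_sum, ← Finset.sum_neg_distrib]
    refine Finset.sum_congr rfl fun x _ => ?_
    simp only [F, hσ x]
    exact conj_mul_sub_add_conj_mul_sub (φ x) (φ (σ x))
  push_cast at pair_sum ⊢
  linear_combination pair_sum / 2

theorem ip_ctrlX_sub_ip {n : ℕ} (φ : Bn n → ℂ) (i : Fin n) (S : Finset (Bn n)) :
    ip φ (ctrlX i S φ) - ip φ φ
      = ∑ x ∈ S, (starRingEnd ℂ) (φ x) * (φ (bflip i x) - φ x) := by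
  rw [ip, ip, ← Finset.sum_sub_distrib, ← Finset.sum_filter_of_ne (p := (· ∈ S)),
    Finset.filter_mem_eq_inter, Finset.univ_inter]
  · refine Finset.sum_congr rfl fun x hx => ?_
    simp [ctrlX, hx, mul_sub]
  · intro x _ hx
    by_contra hxS
    simp [ctrlX, hxS] at hx

theorem two_pow_pred_mul_infl {n : ℕ} (i : Fin n) (φ : Bn n → ℂ) :
    2 ^ (n - 1) * infl i φ = (∑ x : Bn n, ‖φ x - φ (bflip i x)‖ ^ 2) / 2 := by
  have two_pow : (2 : ℝ) ^ n = 2 ^ (n - 1) * 2 := by rw [← pow_succ, Nat.sub_add_cancel i.pos]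
  rw [infl, two_pow]
  field_simp

/-- `|⟨φ, E_{i,S} φ⟩ - ⟨φ,φ⟩| ≤ 2^{n-1} I_i(φ)`. -/
theorem stmt0 {n : ℕ} (φ : Bn n → ℂ) (i : Fin n) (S : Finset (Bn n))
    (hS : ∀ x, bflip i x ∈ S ↔ x ∈ S) :
    ‖ip φ (ctrlX i S φ) - ip φ φ‖ ≤ 2 ^ (n - 1) * infl i φ := by
  rw [ip_ctrlX_sub_ip, sum_conj_mul_sub_comp_involution (bflip_involutive i) hS, norm_neg,
    Complex.norm_real, two_pow_pred_mul_infl]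
  refine (Real.norm_of_nonneg (by positivity)).trans_le ?_
  gcongr
  exact S.subset_univ
end

section
/- Suppose a subspace M of ℂ^{2^n} of dimension at least 2 perfectly corrects the error set of single-point-controlled bit flips in the Knill–Laflamme sense: for all errors X, Y in the set and all orthogonal codewords φ₁, φ₂ ∈ M, ⟨Xφ₁, Yφ₂⟩ = 0. Then any two orthonormal codewords φ, ψ ∈ M satisfy, for every q ∈ {0,1}^n and i ∈ [n], (φ(q) − φ(q ⊕ e_i))*(ψ(q) − ψ(q ⊕ e_i)) = 0. -/
open scoped BigOperators
open Complex

/-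
Pairing a codeword `φ` with `E_{i,{q}} ψ` differs from pairing it with `ψ` only at the two
points `q` and `q ⊕ e_i` moved by the controlled flip, and the difference is exactly
`-(φ(q) - φ(q ⊕ e_i))* (ψ(q) - ψ(q ⊕ e_i))`. The Knill–Laflamme condition for the pair of
errors `(id, E_{i,{q}})` makes both pairings vanish when `φ ⊥ ψ`.
-/

section BitFlip

variable {n : ℕ} (i : Fin n)

@[simp]
theorem bflip_apply_self (x : Bn n) : bflip i x i = !x i := by
  simp [bflip]

theorem bflip_apply_of_ne {j : Fin n} (hj : j ≠ i) (x : Bn n) : bflip i x j = x j := by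
  simp [bflip, Function.update_of_ne hj]

@[simp]
theorem bflip_bflip (x : Bn n) : bflip i (bflip i x) = x := by
  simp [bflip]

theorem bflip_ne (x : Bn n) : bflip i x ≠ x := fun h => by
  simpa using congrFun h i

theorem forall_ne_eq_iff_eq_or_eq_bflip {x q : Bn n} :
    (∀ j, j ≠ i → x j = q j) ↔ x = q ∨ x = bflip i q := by
  constructor
  · intro h
    by_cases hxi : x i = q i
    · left
      funext j
      by_cases hj : j = i
      · exact hj ▸ hxi
      · exact h j hj
    · right
      funext j
      by_cases hj : j = i
      · subst hj
        rw [bflip_apply_self]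
        exact Bool.eq_not_of_ne hxi
      · rw [bflip_apply_of_ne i hj, h j hj]
  · rintro (rfl | rfl) j hj
    · rfl
    · exact bflip_apply_of_ne i hj q

end BitFlip

theorem ip_ctrlXpt_sub_ip {n : ℕ} (i : Fin n) (q : Bn n) (φ ψ : Bn n → ℂ) :
    ip φ (ctrlXpt i q ψ) - ip φ ψ =
      -((starRingEnd ℂ) (φ q - φ (bflip i q)) * (ψ q - ψ (bflip i q))) := by
  have hsupp : ∀ x ∈ Finset.univ, x ≠ q ∧ x ≠ bflip i q →
      (starRingEnd ℂ) (φ x) * (ctrlXpt i q ψ x - ψ x) = 0 := by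
    intro x _ hx
    have hctrl : ¬ ∀ j, j ≠ i → x j = q j := by
      rw [forall_ne_eq_iff_eq_or_eq_bflip]
      tauto
    simp [ctrlXpt, hctrl]
  have hq : ctrlXpt i q ψ q = ψ (bflip i q) := if_pos fun _ _ => rfl
  have hq' : ctrlXpt i q ψ (bflip i q) = ψ q := by
    rw [ctrlXpt, if_pos ((forall_ne_eq_iff_eq_or_eq_bflip i).2 (Or.inr rfl)), bflip_bflip]
  rw [ip, ip, ← Finset.sum_sub_distrib]
  simp_rw [← mul_sub]
  rw [Finset.sum_eq_add_of_mem q (bflip i q) (Finset.mem_univ _) (Finset.mem_univ _)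
    (bflip_ne i q).symm hsupp, hq, hq', map_sub]
  ring

theorem stmt4_general {n : ℕ} (M : Submodule ℂ (Bn n → ℂ))
    (hKL : ∀ X Y : (Bn n → ℂ) → (Bn n → ℂ),
      (X = id ∨ ∃ i q, X = ctrlXpt i q) → (Y = id ∨ ∃ i q, Y = ctrlXpt i q) →
      ∀ φ₁ ∈ M, ∀ φ₂ ∈ M, ip φ₁ φ₂ = 0 → ip (X φ₁) (Y φ₂) = 0) :
    ∀ φ ∈ M, ∀ ψ ∈ M, ip φ φ = 1 → ip ψ ψ = 1 → ip φ ψ = 0 →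
      ∀ (q : Bn n) (i : Fin n),
        (starRingEnd ℂ) (φ q - φ (bflip i q)) * (ψ q - ψ (bflip i q)) = 0 := by
  intro φ hφ ψ hψ _ _ hortho q i
  have hflip : ip φ (ctrlXpt i q ψ) = 0 :=
    hKL id (ctrlXpt i q) (Or.inl rfl) (Or.inr ⟨i, q, rfl⟩) φ hφ ψ hψ hortho
  simpa [hflip, hortho] using ip_ctrlXpt_sub_ip i q φ ψ

/-- if `M` (of dimension ≥ 2) perfectly corrects the identity together
with all single-point-controlled bit flips in the Knill–Laflamme sense, then any two
orthonormal codewords `φ, ψ` satisfy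
`(φ(q) - φ(q ⊕ e_i))* (ψ(q) - ψ(q ⊕ e_i)) = 0` for all `q, i`. -/
theorem stmt4 {n : ℕ} (M : Submodule ℂ (Bn n → ℂ))
    (h2 : 2 ≤ Module.finrank ℂ M)
    (hKL : ∀ X Y : (Bn n → ℂ) → (Bn n → ℂ),
      (X = id ∨ ∃ i q, X = ctrlXpt i q) → (Y = id ∨ ∃ i q, Y = ctrlXpt i q) →
      ∀ φ₁ ∈ M, ∀ φ₂ ∈ M, ip φ₁ φ₂ = 0 → ip (X φ₁) (Y φ₂) = 0) :
    ∀ φ ∈ M, ∀ ψ ∈ M, ip φ φ = 1 → ip ψ ψ = 1 → ip φ ψ = 0 →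
      ∀ (q : Bn n) (i : Fin n),
        (starRingEnd ℂ) (φ q - φ (bflip i q)) * (ψ q - ψ (bflip i q)) = 0 :=
  stmt4_general M hKL
end

section
/- Let f : {0,1}^{n'} → {−1/2, 1/2} be a balanced function (taking each value on exactly half the inputs), and let n = 2B·n'. For z ∈ {0,1}^B define f_z : {0,1}^n → ℂ by f_z(x) = ∏_{k=1}^{B} f(x_{k,z_k}), where x is partitioned into 2B consecutive blocks of length n' and x_{k,b} is the (2k−1+b)-th block. Then the family {f_z : z ∈ {0,1}^B} is orthogonal in ℂ^{2^n}: for z ≠ z', Σ_{x∈{0,1}^n} f_z(x)* f_{z'}(x) = 0. Moreover ⟨f_z, f_z⟩ = 2^{n−2B}. -/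
open scoped BigOperators
open Complex

/-- Strings of length `n = 2Bn'`, viewed as `2B` blocks of length `n'`, indexed by
`(k,b)` with `k : Fin B`, `b : Bool`. -/
abbrev Blk (B n' : ℕ) := Fin B → Bool → (Fin n' → Bool)

/-- Hermitian inner product on functions `{0,1}^n → ℂ` in the block encoding. -/
noncomputable def ipB {B n' : ℕ} (h g : Blk B n' → ℂ) : ℂ :=
  ∑ x : Blk B n', (starRingEnd ℂ) (h x) * g x

/-- The codeword `f_z(x) = ∏_k f(x_{k,z_k})`. -/
noncomputable def fz {B n' : ℕ} (f : (Fin n' → Bool) → ℂ) (z : Fin B → Bool)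
    (x : Blk B n') : ℂ :=
  ∏ k : Fin B, f (x k (z k))

/-- Flip the `j`-th bit of a length-`n'` string. -/
def wflip {n' : ℕ} (j : Fin n') (w : Fin n' → Bool) : Fin n' → Bool :=
  Function.update w j (!w j)

/-- Flip the bit at position `j` of block `(k,b)`. -/
def blkflip {B n' : ℕ} (k : Fin B) (b : Bool) (j : Fin n') (x : Blk B n') : Blk B n' :=
  Function.update x k (Function.update (x k) b (wflip j (x k b)))

/-- Influence of coordinate `(k,b,j)` on `φ : {0,1}^n → ℂ`, `n = 2Bn'`. -/
noncomputable def inflB {B n' : ℕ} (k : Fin B) (b : Bool) (j : Fin n')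
    (φ : Blk B n' → ℂ) : ℝ :=
  (∑ x : Blk B n', ‖φ x - φ (blkflip k b j x)‖ ^ 2) / 2 ^ (2 * B * n')


/-
The inner product `⟨f_z, f_{z'}⟩` factors over the `B` pairs of blocks `(x_{k,0}, x_{k,1})`.
If `z_k ≠ z'_k`, the `k`-th factor sums `f` over two independent blocks and equals
`(∑ f)² = 0` by balance; if `z_k = z'_k`, it equals `2^{n'} ∑ |f|² = 2^{2n'-2}`.
-/

section BoolArrow
variable {W R : Type*} [Fintype W] [CommSemiring R]

lemma sum_boolArrow_eq_sum_prod (F : (Bool → W) → R) :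
    ∑ y : Bool → W, F y = ∑ p : W × W, F (fun c => cond c p.2 p.1) := by
  refine Fintype.sum_equiv (Equiv.boolArrowEquivProd W) _ _ fun y => congrArg F ?_
  funext c; cases c <;> rfl

lemma sum_boolArrow_mul_of_ne {b b' : Bool} (hb : b ≠ b') (g h : W → R) :
    ∑ y : Bool → W, g (y b) * h (y b') = (∑ w, g w) * ∑ w, h w := by
  obtain rfl : b' = !b := by cases b <;> cases b' <;> simp_all
  rw [sum_boolArrow_eq_sum_prod, Fintype.sum_prod_type, Fintype.sum_mul_sum]
  cases b
  · rfl
  · exact Finset.sum_comm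

lemma sum_boolArrow_mul_self (b : Bool) (g h : W → R) :
    ∑ y : Bool → W, g (y b) * h (y b) = Fintype.card W * ∑ w, g w * h w := by
  rw [sum_boolArrow_eq_sum_prod, Fintype.sum_prod_type]
  cases b <;> simp [Finset.sum_const, Finset.mul_sum, mul_comm]

end BoolArrow

lemma sum_eq_zero_of_balanced {W M : Type*} [Fintype W] [AddCommGroup M] [DecidableEq M]
    {f : W → M} {c : M} (hval : ∀ w, f w = c ∨ f w = -c)
    (hbal : 2 * (Finset.univ.filter fun w => f w = c).card = Fintype.card W) :
    ∑ w, f w = 0 := by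
  have hcompl : (Finset.univ.filter fun w => ¬f w = c).card
      = (Finset.univ.filter fun w => f w = c).card := by
    have := Finset.card_filter_add_card_filter_not (s := Finset.univ) fun w => f w = c
    rw [Finset.card_univ] at this
    omega
  have hneg : ∀ w ∈ Finset.univ.filter (fun w => ¬f w = c), f w = -c := fun w hw =>
    (hval w).resolve_left (Finset.mem_filter.1 hw).2
  rw [← Finset.sum_filter_add_sum_filter_not Finset.univ (fun w => f w = c),
    Finset.sum_congr rfl fun w hw => (Finset.mem_filter.1 hw).2, Finset.sum_congr rfl hneg,
    Finset.sum_const, Finset.sum_const, hcompl, smul_neg, add_neg_cancel]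

section Codewords
variable {B n' : ℕ}

lemma ipB_fz (f g : (Fin n' → Bool) → ℂ) (z z' : Fin B → Bool) :
    ipB (fz f z) (fz g z') =
      ∏ k, ∑ y : Bool → Fin n' → Bool, starRingEnd ℂ (f (y (z k))) * g (y (z' k)) := by
  classical
  rw [Fintype.prod_sum]
  refine Finset.sum_congr rfl fun x _ => ?_
  rw [fz, fz, map_prod, ← Finset.prod_mul_distrib]

lemma ipB_fz_eq_zero {g : (Fin n' → Bool) → ℂ} (hg : ∑ w, g w = 0) (f : (Fin n' → Bool) → ℂ)
    {z z' : Fin B → Bool} (hz : z ≠ z') : ipB (fz f z) (fz g z') = 0 := by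
  obtain ⟨k, hk⟩ := Function.ne_iff.1 hz
  rw [ipB_fz]
  refine Finset.prod_eq_zero (Finset.mem_univ k) ?_
  rw [sum_boolArrow_mul_of_ne hk (fun w => starRingEnd ℂ (f w)) g, hg, mul_zero]

lemma ipB_fz_self (f : (Fin n' → Bool) → ℂ) (z : Fin B → Bool) :
    ipB (fz f z) (fz f z) = (2 ^ n' * ∑ w, starRingEnd ℂ (f w) * f w) ^ B := by
  have hblock : ∀ b : Bool, ∑ y : Bool → Fin n' → Bool, starRingEnd ℂ (f (y b)) * f (y b)
      = 2 ^ n' * ∑ w, starRingEnd ℂ (f w) * f w := fun b => by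
    rw [sum_boolArrow_mul_self b (fun w => starRingEnd ℂ (f w)) f]
    simp
  simp only [ipB_fz, hblock, Finset.prod_const, Finset.card_univ, Fintype.card_fin]

end Codewords

/-- for a balanced `f : {0,1}^{n'} → {±1/2}`, the family
`{f_z : z ∈ {0,1}^B}` is orthogonal, and `⟨f_z, f_z⟩ = 2^{n-2B}` with `n = 2Bn'`. -/
theorem stmt5 {B n' : ℕ} (hn' : 0 < n')
    (f : (Fin n' → Bool) → ℂ)
    (hval : ∀ w, f w = 1 / 2 ∨ f w = -(1 / 2))
    (hbal : {w | f w = 1 / 2}.ncard = 2 ^ (n' - 1)) :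
    (∀ z z' : Fin B → Bool, z ≠ z' → ipB (fz f z) (fz f z') = 0) ∧
    (∀ z : Fin B → Bool, ipB (fz f z) (fz f z) = 2 ^ (2 * B * n' - 2 * B)) := by
  obtain ⟨m, rfl⟩ := Nat.exists_eq_add_one_of_ne_zero hn'.ne'
  have hsum : ∑ w, f w = 0 := by
    refine sum_eq_zero_of_balanced hval ?_
    rw [← Set.toFinset_ofPred, ← Set.ncard_eq_toFinset_card', hbal]
    simp [pow_succ']
  have hsq : ∀ w, starRingEnd ℂ (f w) * f w = 1 / 4 := fun w => by
    rcases hval w with h | h <;> rw [h] <;> norm_num [Complex.conj_ofNat]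
  refine ⟨fun z z' hz => ipB_fz_eq_zero hsum f hz, fun z => ?_⟩
  rw [ipB_fz_self, show 2 * B * (m + 1) - 2 * B = 2 * m * B by
    rw [Nat.mul_succ, Nat.add_sub_cancel]; ring, pow_mul]
  simp only [hsq, Finset.sum_const, Finset.card_univ, Fintype.card_pi, Fintype.card_bool,
    Finset.prod_const, Fintype.card_fin, nsmul_eq_mul]
  push_cast
  ring
end

section
/- In the block construction with a balanced f of influence at most s, the subspace W = span{f_z : z ∈ {0,1}^B} has dimension 2^B and is (ControlledBitFlip, 2s)-immune: for every controlled bit-flip operator E_{i,S} (i ∈ [n], S ⊆ {0,1}^{n-1}) and every φ ∈ W, |⟨φ, E_{i,S} φ⟩| ≥ (1 − 2s)·⟨φ,φ⟩. -/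
open scoped BigOperators
open Complex

/-- Controlled bit flip on coordinate `(k,b,j)` with control set `S ⊆ {0,1}^{n-1}`,
encoded as an invariant set of full strings. -/
noncomputable def ctrlXB {B n' : ℕ} (k : Fin B) (b : Bool) (j : Fin n')
    (S : Finset (Blk B n')) (g : Blk B n' → ℂ) : Blk B n' → ℂ :=
  fun x => if x ∈ S then g (blkflip k b j x) else g x

/-!
The codewords `f_z` are orthogonal: `⟨f_z, f_z'⟩` factorises over the blocks, and a block in
which `z` and `z'` read different halves contributes `(∑ f)² = 0`. Flipping a bit of block
`(k, b)` fixes `f_z` unless `z k = b`, and otherwise only replaces the `k`-th factor `f` by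
`f - f ∘ flip`; so for `φ ∈ W` the difference `φ - φ ∘ flip` expands in another orthogonal product
family, which gives `∑ |φ - φ ∘ flip|² ≤ 4 s ‖φ‖²`. For a controlled flip `E` with invariant
control set `S`, `⟨φ, E φ⟩ = ‖φ‖² - ½ ∑_{x ∈ S} |φ x - φ (flip x)|²` is real, hence
`|⟨φ, E φ⟩| ≥ (1 - 2 s) ‖φ‖²`.
-/

open Finset

section Orthogonal

variable {ι α : Type*} [Fintype ι] [DecidableEq ι] [Fintype α]

lemma sum_norm_sq_sum_mul_of_orthogonal (g : ι → α → ℂ) (a : ι → ℝ)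
    (hg : ∀ i i', ∑ x, starRingEnd ℂ (g i x) * g i' x = if i = i' then (a i : ℂ) else 0)
    (c : ι → ℂ) :
    ∑ x, ‖∑ i, c i * g i x‖ ^ 2 = ∑ i, ‖c i‖ ^ 2 * a i := by
  apply Complex.ofReal_injective
  push_cast
  simp_rw [← Complex.conj_mul', map_sum, map_mul, sum_mul_sum, sum_comm (γ := α)]
  calc ∑ i, ∑ i', ∑ x, starRingEnd ℂ (c i) * starRingEnd ℂ (g i x) * (c i' * g i' x)
      = ∑ i, ∑ i', starRingEnd ℂ (c i) * c i' * ∑ x, starRingEnd ℂ (g i x) * g i' x := by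
        refine sum_congr rfl fun i _ => sum_congr rfl fun i' _ => ?_
        rw [mul_sum]
        exact sum_congr rfl fun x _ => by ring
    _ = ∑ i, starRingEnd ℂ (c i) * c i * a i := by simp [hg]

lemma linearIndependent_of_orthogonal (g : ι → α → ℂ) (a : ι → ℝ)
    (hg : ∀ i i', ∑ x, starRingEnd ℂ (g i x) * g i' x = if i = i' then (a i : ℂ) else 0)
    (ha : ∀ i, 0 < a i) :
    LinearIndependent ℂ g := by
  rw [Fintype.linearIndependent_iff]
  intro c hc i
  have hzero : ∑ i, ‖c i‖ ^ 2 * a i = 0 := by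
    rw [← sum_norm_sq_sum_mul_of_orthogonal g a hg c]
    have hφ (x : α) : ∑ i, c i * g i x = 0 := by simpa using congrFun hc x
    simp [hφ]
  have hi := (sum_eq_zero_iff_of_nonneg fun i _ => by positivity [(ha i).le]).mp hzero i
    (mem_univ i)
  simpa [(ha i).ne'] using hi

end Orthogonal

lemma sum_conj_mul_ite_mem_involutive {α : Type*} [Fintype α] [DecidableEq α] {σ : α → α}
    (hσ : Function.Involutive σ) {S : Finset α} (hS : ∀ x, σ x ∈ S ↔ x ∈ S) (φ : α → ℂ) :
    ∑ x, starRingEnd ℂ (φ x) * (if x ∈ S then φ (σ x) else φ x) =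
      ((∑ x, ‖φ x‖ ^ 2 - (∑ x ∈ S, ‖φ x - φ (σ x)‖ ^ 2) / 2 : ℝ) : ℂ) := by
  set T := ∑ x ∈ S, starRingEnd ℂ (φ x) * (φ (σ x) - φ x)
  have hsplit : ∑ x, starRingEnd ℂ (φ x) * (if x ∈ S then φ (σ x) else φ x) =
      ∑ x, starRingEnd ℂ (φ x) * φ x + T := by
    have hT : T = ∑ x, if x ∈ S then starRingEnd ℂ (φ x) * (φ (σ x) - φ x) else 0 := by
      rw [sum_ite_mem, univ_inter]
    rw [hT, ← sum_add_distrib]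
    refine sum_congr rfl fun x _ => ?_
    split_ifs <;> ring
  -- reindexing by `σ`, which permutes `S`, turns `2 T` into minus a sum of squares
  have hreindex : T = ∑ x ∈ S, starRingEnd ℂ (φ (σ x)) * (φ x - φ (σ x)) :=
    sum_equiv hσ.toPerm (fun x => (hS x).symm) fun x _ => by simp [hσ x]
  have htwice : 2 * T = -∑ x ∈ S, starRingEnd ℂ (φ x - φ (σ x)) * (φ x - φ (σ x)) := by
    rw [two_mul]
    nth_rewrite 2 [hreindex]
    rw [← sum_add_distrib, ← sum_neg_distrib]
    exact sum_congr rfl fun x _ => by rw [map_sub]; ring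
  rw [hsplit]
  simp_rw [Complex.conj_mul'] at htwice ⊢
  push_cast
  linear_combination htwice / 2

lemma wflip_wflip {n' : ℕ} (j : Fin n') (w : Fin n' → Bool) : wflip j (wflip j w) = w := by
  simp [wflip]

lemma blkflip_apply_of_ne {B n' : ℕ} {k k' : Fin B} (h : k' ≠ k) (b : Bool) (j : Fin n')
    (x : Blk B n') : blkflip k b j x k' = x k' :=
  Function.update_of_ne h _ x

lemma blkflip_apply_self {B n' : ℕ} (k : Fin B) (b c : Bool) (j : Fin n') (x : Blk B n') :
    blkflip k b j x k c = if c = b then wflip j (x k b) else x k c := by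
  by_cases h : c = b
  · subst h; simp [blkflip]
  · simp [blkflip, h]

lemma blkflip_involutive {B n' : ℕ} (k : Fin B) (b : Bool) (j : Fin n') :
    Function.Involutive (blkflip (n' := n') k b j) := by
  intro x
  funext k' c
  by_cases hk : k' = k
  · subst hk
    by_cases hc : c = b <;> simp [blkflip_apply_self, hc, wflip_wflip]
  · rw [blkflip_apply_of_ne hk, blkflip_apply_of_ne hk]

lemma sum_norm_sq_sub_le_norm_ipB_ctrlXB {B n' : ℕ} (k : Fin B) (b : Bool) (j : Fin n')
    {S : Finset (Blk B n')} (hS : ∀ x, blkflip k b j x ∈ S ↔ x ∈ S) (φ : Blk B n' → ℂ) :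
    ∑ x, ‖φ x‖ ^ 2 - (∑ x, ‖φ x - φ (blkflip k b j x)‖ ^ 2) / 2 ≤
      ‖ipB φ (ctrlXB k b j S φ)‖ := by
  have hS_le : ∑ x ∈ S, ‖φ x - φ (blkflip k b j x)‖ ^ 2 ≤
      ∑ x, ‖φ x - φ (blkflip k b j x)‖ ^ 2 :=
    sum_le_sum_of_subset_of_nonneg (subset_univ S) fun _ _ _ => by positivity
  simp only [ipB, ctrlXB]
  rw [sum_conj_mul_ite_mem_involutive (blkflip_involutive k b j) hS,
    Complex.norm_real, Real.norm_eq_abs]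
  linarith [le_abs_self (∑ x, ‖φ x‖ ^ 2 - (∑ x ∈ S, ‖φ x - φ (blkflip k b j x)‖ ^ 2) / 2)]

section BlockProduct

variable {B : ℕ} {β : Type*} [Fintype β]

def blockProd (z : Fin B → Bool) (H : Fin B → β → ℂ) (x : Fin B → Bool → β) : ℂ :=
  ∏ k, H k (x k (z k))

lemma sum_bool_arrow_mul (c c' : Bool) (F G : β → ℂ) :
    ∑ y : Bool → β, F (y c) * G (y c') =
      if c = c' then Fintype.card β * ∑ w, F w * G w else (∑ w, F w) * ∑ w, G w := by
  rw [← (Equiv.boolArrowEquivProd β).symm.sum_comp, Fintype.sum_prod_type]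
  cases c <;> cases c' <;> simp [Equiv.boolArrowEquivProd, mul_sum, sum_mul]
  exact sum_comm

lemma sum_blockProd_mul_blockProd (z z' : Fin B → Bool) (H H' : Fin B → β → ℂ) :
    ∑ x, blockProd z H x * blockProd z' H' x =
      ∏ k, if z k = z' k then Fintype.card β * ∑ w, H k w * H' k w
        else (∑ w, H k w) * ∑ w, H' k w := by
  simp_rw [← sum_bool_arrow_mul, Fintype.prod_sum, blockProd, prod_mul_distrib]

lemma sum_conj_blockProd_mul_blockProd (H : (Fin B → Bool) → Fin B → β → ℂ)
    (hH : ∀ z k, ∑ w, H z k w = 0) (z z' : Fin B → Bool) :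
    ∑ x, starRingEnd ℂ (blockProd z (H z) x) * blockProd z' (H z') x =
      if z = z' then ((Fintype.card β ^ B * ∏ k, ∑ w, ‖H z k w‖ ^ 2 : ℝ) : ℂ) else 0 := by
  have hconj (x : Fin B → Bool → β) :
      starRingEnd ℂ (blockProd z (H z) x) = blockProd z (fun k w => starRingEnd ℂ (H z k w)) x :=
    map_prod _ _ _
  simp_rw [hconj, sum_blockProd_mul_blockProd]
  split_ifs with h
  · subst h
    simp [Complex.conj_mul', prod_mul_distrib]
  · obtain ⟨k, hk⟩ := Function.ne_iff.mp h
    exact prod_eq_zero (mem_univ k) (by simp [hk, hH])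

end BlockProduct

lemma prod_sub_prod_eq_prod_update {ι R : Type*} [Fintype ι] [DecidableEq ι] [CommRing R]
    (i : ι) {g g' : ι → R} (h : ∀ k ≠ i, g k = g' k) :
    ∏ k, g k - ∏ k, g' k = ∏ k, Function.update g i (g i - g' i) k := by
  have hcompl : ∏ k ∈ {i}ᶜ, g' k = ∏ k ∈ {i}ᶜ, g k :=
    prod_congr rfl fun k hk => (h k (mem_compl.mp hk ∘ mem_singleton.mpr)).symm
  rw [Fintype.prod_eq_mul_prod_compl i g, Fintype.prod_eq_mul_prod_compl i g',
    Fintype.prod_eq_mul_prod_compl i, Function.update_self, hcompl,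
    prod_congr rfl fun k hk => Function.update_of_ne (mem_compl.mp hk ∘ mem_singleton.mpr) _ g]
  ring

lemma prod_update_le_mul_prod {ι : Type*} [Fintype ι] [DecidableEq ι] {a : ι → ℝ}
    (ha : ∀ k, 0 ≤ a k) (i : ι) {v t : ℝ} (hv : v ≤ t * a i) :
    ∏ k, Function.update a i v k ≤ t * ∏ k, a k := by
  rw [Fintype.prod_eq_mul_prod_compl i, Fintype.prod_eq_mul_prod_compl i a, Function.update_self,
    prod_congr rfl fun k hk => Function.update_of_ne (mem_compl.mp hk ∘ mem_singleton.mpr) _ a,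
    ← mul_assoc]
  exact mul_le_mul_of_nonneg_right hv (prod_nonneg fun k _ => ha k)

section Codewords

variable {B n' : ℕ} {f : (Fin n' → Bool) → ℂ}

lemma sum_conj_fz_mul_fz (hf0 : ∑ w, f w = 0) (z z' : Fin B → Bool) :
    ∑ x, starRingEnd ℂ (fz f z x) * fz f z' x =
      if z = z' then (((2 ^ n') ^ B * ∏ _k : Fin B, ∑ w, ‖f w‖ ^ 2 : ℝ) : ℂ) else 0 := by
  rw [show (2 : ℝ) ^ n' = Fintype.card (Fin n' → Bool) by simp]
  exact sum_conj_blockProd_mul_blockProd (fun _ _ => f) (fun _ _ => hf0) z z'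

lemma linearIndependent_fz (hf0 : ∑ w, f w = 0) (hf : f ≠ 0) :
    LinearIndependent ℂ (fz (B := B) f) := by
  obtain ⟨w, hw⟩ := Function.ne_iff.mp hf
  have hpos : 0 < ∑ w, ‖f w‖ ^ 2 :=
    sum_pos' (fun _ _ => by positivity) ⟨w, mem_univ w, pow_pos (norm_pos_iff.mpr hw) 2⟩
  exact linearIndependent_of_orthogonal _ _ (sum_conj_fz_mul_fz hf0) fun _ => by positivity

lemma fz_sub_fz_blkflip (k : Fin B) (b : Bool) (j : Fin n') (z : Fin B → Bool) (x : Blk B n') :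
    fz f z x - fz f z (blkflip k b j x) =
      blockProd z (Function.update (fun _ => f) k
        (if z k = b then fun w => f w - f (wflip j w) else 0)) x := by
  rw [fz, fz, prod_sub_prod_eq_prod_update k fun k' hk' => by rw [blkflip_apply_of_ne hk'],
    blockProd]
  refine prod_congr rfl fun k' _ => ?_
  by_cases hk : k' = k
  · subst hk
    by_cases hz : z k' = b <;> simp [blkflip_apply_self, hz]
  · simp [Function.update_of_ne hk]

lemma sum_norm_sq_sub_blkflip_le (hf0 : ∑ w, f w = 0) (k : Fin B) (b : Bool) (j : Fin n')
    {t : ℝ} (ht : ∑ w, ‖f w - f (wflip j w)‖ ^ 2 ≤ t * ∑ w, ‖f w‖ ^ 2)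
    {φ : Blk B n' → ℂ} (hφ : φ ∈ Submodule.span ℂ (Set.range (fz (B := B) f))) :
    ∑ x, ‖φ x - φ (blkflip k b j x)‖ ^ 2 ≤ t * ∑ x, ‖φ x‖ ^ 2 := by
  obtain ⟨c, rfl⟩ := (Submodule.mem_span_range_iff_exists_fun ℂ).mp hφ
  set h : (Fin B → Bool) → (Fin n' → Bool) → ℂ :=
    fun z => if z k = b then fun w => f w - f (wflip j w) else 0
  set H : (Fin B → Bool) → Fin B → (Fin n' → Bool) → ℂ :=
    fun z => Function.update (fun _ => f) k (h z)
  have hH0 (z : Fin B → Bool) (k' : Fin B) : ∑ w, H z k' w = 0 := by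
    by_cases hk : k' = k
    · subst hk
      by_cases hz : z k' = b
      · have hflip : ∑ w, f (wflip j w) = ∑ w, f w :=
          Equiv.sum_comp (Function.Involutive.toPerm _ (wflip_wflip j)) f
        simp only [H, h, hz, Function.update_self, if_true, sum_sub_distrib, hflip, sub_self]
      · simp [H, h, hz]
    · simp [H, Function.update_of_ne hk, hf0]
  have hh (z : Fin B → Bool) : ∑ w, ‖h z w‖ ^ 2 ≤ t * ∑ w, ‖f w‖ ^ 2 := by
    by_cases hz : z k = b
    · simpa [h, hz] using ht
    · simpa [h, hz] using (sum_nonneg fun w _ => by positivity).trans ht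
  have hprod (z : Fin B → Bool) :
      ∏ k', ∑ w, ‖H z k' w‖ ^ 2 ≤ t * ∏ _k : Fin B, ∑ w, ‖f w‖ ^ 2 := by
    simp only [H, Function.apply_update (fun _ (g : (Fin n' → Bool) → ℂ) => ∑ w, ‖g w‖ ^ 2)]
    exact prod_update_le_mul_prod (fun _ => sum_nonneg fun _ _ => by positivity) k (hh z)
  have hdiff (x : Blk B n') : (∑ z, c z • fz f z) x - (∑ z, c z • fz f z) (blkflip k b j x) =
      ∑ z, c z * blockProd z (H z) x := by
    simp only [Finset.sum_apply, Pi.smul_apply, smul_eq_mul, ← sum_sub_distrib, ← mul_sub,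
      fz_sub_fz_blkflip]
    rfl
  have hval (x : Blk B n') : (∑ z, c z • fz f z) x = ∑ z, c z * fz f z x := by
    simp only [Finset.sum_apply, Pi.smul_apply, smul_eq_mul]
  simp_rw [hdiff, hval,
    sum_norm_sq_sum_mul_of_orthogonal _ _ (sum_conj_blockProd_mul_blockProd H hH0),
    sum_norm_sq_sum_mul_of_orthogonal _ _ (sum_conj_fz_mul_fz hf0), mul_sum]
  refine sum_le_sum fun z _ => ?_
  calc _ ≤ ‖c z‖ ^ 2 * ((2 ^ n') ^ B * (t * ∏ _k : Fin B, ∑ w, ‖f w‖ ^ 2)) := by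
        simp only [Fintype.card_fun, Fintype.card_bool, Fintype.card_fin, Nat.cast_pow,
          Nat.cast_ofNat]
        gcongr
        exact hprod z
    _ = _ := by ring

end Codewords

section HalfValued

variable {β : Type*} [Fintype β] {f : β → ℂ}

lemma sum_eq_zero_of_two_mul_ncard_eq (hval : ∀ w, f w = 1 / 2 ∨ f w = -(1 / 2))
    (hbal : 2 * {w | f w = 1 / 2}.ncard = Fintype.card β) : ∑ w, f w = 0 := by
  classical
  have hite (w : β) : f w = if f w = 1 / 2 then 1 / 2 else -(1 / 2) := by
    rcases hval w with h | h <;> norm_num [h]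
  have hcard : #{w | f w = 1 / 2} + #{w | ¬f w = 1 / 2} = Fintype.card β :=
    card_filter_add_card_filter_not _
  rw [Set.ncard_eq_toFinset_card', Set.toFinset_ofPred] at hbal
  rw [sum_congr rfl fun w _ => hite w, sum_ite, sum_const, sum_const, nsmul_eq_mul, nsmul_eq_mul]
  have hsame : (#{w | ¬f w = 1 / 2} : ℂ) = #{w | f w = 1 / 2} := by exact_mod_cast (by omega)
  rw [hsame]
  ring

lemma sum_norm_sq_eq_card_div_four (hval : ∀ w, f w = 1 / 2 ∨ f w = -(1 / 2)) :
    ∑ w, ‖f w‖ ^ 2 = Fintype.card β / 4 := by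
  have hnorm (w : β) : ‖f w‖ ^ 2 = 1 / 4 := by rcases hval w with h | h <;> norm_num [h]
  simp [hnorm, div_eq_mul_inv]

lemma sum_norm_sq_sub_comp_eq_ncard (hval : ∀ w, f w = 1 / 2 ∨ f w = -(1 / 2)) (τ : β → β) :
    ∑ w, ‖f w - f (τ w)‖ ^ 2 = {w | f w ≠ f (τ w)}.ncard := by
  classical
  have hnorm (w : β) : ‖f w - f (τ w)‖ ^ 2 = if f w ≠ f (τ w) then 1 else 0 := by
    rcases hval w with h | h <;> rcases hval (τ w) with h' | h' <;> norm_num [h, h']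
  rw [sum_congr rfl fun w _ => hnorm w, sum_boole, Set.ncard_eq_toFinset_card',
    Set.toFinset_ofPred]

end HalfValued

/-- for balanced `f` of per-coordinate influence at most `s`,
`W = span{f_z}` has dimension `2^B` and is `(ControlledBitFlip, 2s)`-immune:
`|⟨φ, E_{i,S} φ⟩| ≥ (1 - 2s)⟨φ,φ⟩` for all `φ ∈ W` and all `E_{i,S}`. -/
theorem stmt7 {B n' : ℕ} (hn' : 0 < n')
    (f : (Fin n' → Bool) → ℂ)
    (hval : ∀ w, f w = 1 / 2 ∨ f w = -(1 / 2))
    (hbal : {w | f w = 1 / 2}.ncard = 2 ^ (n' - 1))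
    (s : ℝ)
    (hs : ∀ j : Fin n', (({w | f w ≠ f (wflip j w)}.ncard : ℝ)) / 2 ^ n' ≤ s) :
    Module.finrank ℂ (Submodule.span ℂ (Set.range (fz (B := B) f))) = 2 ^ B ∧
    ∀ φ ∈ Submodule.span ℂ (Set.range (fz (B := B) f)),
      ∀ (k : Fin B) (b : Bool) (j : Fin n') (S : Finset (Blk B n')),
        (∀ x, blkflip k b j x ∈ S ↔ x ∈ S) →
        (1 - 2 * s) * ∑ x : Blk B n', ‖φ x‖ ^ 2 ≤
          ‖ipB φ (ctrlXB k b j S φ)‖ := by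
  have hf0 : ∑ w, f w = 0 := sum_eq_zero_of_two_mul_ncard_eq hval <| by
    rw [hbal, Fintype.card_fun, Fintype.card_bool, Fintype.card_fin, ← pow_succ',
      Nat.sub_add_cancel hn']
  have hf : f ≠ 0 := fun h => by simpa [h] using hval fun _ => false
  refine ⟨by simp [finrank_span_eq_card (linearIndependent_fz hf0 hf)], ?_⟩
  intro φ hφ k b j S hS
  have hflip : ∑ w, ‖f w - f (wflip j w)‖ ^ 2 ≤ 4 * s * ∑ w, ‖f w‖ ^ 2 := by
    have hsj := hs j
    rw [div_le_iff₀ (by positivity)] at hsj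
    rw [sum_norm_sq_sub_comp_eq_ncard hval, sum_norm_sq_eq_card_div_four hval]
    simp only [Fintype.card_fun, Fintype.card_bool, Fintype.card_fin, Nat.cast_pow,
      Nat.cast_ofNat]
    linarith
  have hW := sum_norm_sq_sub_blkflip_le hf0 k b j hflip hφ
  have hE := sum_norm_sq_sub_le_norm_ipB_ctrlXB k b j hS φ
  linarith
end

section
/- Let M be a subspace of ℂ^N of dimension at least 2. Then there exist two orthonormal vectors φ, ψ ∈ M such that Σ_{x} |φ(x)|·|ψ(x)| ≥ 1/2. -/
/-!
Take orthonormal `e, f ∈ M`. If `∑ |e x| |f x| < 1/2`, pass to the orthonormal pair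
`(e + f)/√2, (e - f)/√2`: pointwise `|a + b| |a - b| ≥ (|a| - |b|)²`, so summing gives
`∑ |φ x| |ψ x| ≥ (1 + 1 - 2 ∑ |e x| |f x|) / 2 > 1/2`.
-/

open scoped InnerProductSpace

theorem sq_norm_sub_norm_le_norm_add_mul_norm_sub {E : Type*} [SeminormedAddCommGroup E]
    (a b : E) : (‖a‖ - ‖b‖) ^ 2 ≤ ‖a + b‖ * ‖a - b‖ := by
  have hsub : |‖a‖ - ‖b‖| ≤ ‖a - b‖ := abs_norm_sub_norm_le a b
  have hadd : |‖a‖ - ‖b‖| ≤ ‖a + b‖ := by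
    simpa using abs_norm_sub_norm_le a (-b)
  rw [← sq_abs, sq]
  exact mul_le_mul hadd hsub (abs_nonneg _) (norm_nonneg _)

section InnerProductSpace

variable {𝕜 E : Type*} [RCLike 𝕜] [NormedAddCommGroup E] [InnerProductSpace 𝕜 E]

theorem norm_inv_sqrt_two_smul {v : E} (hv : ‖v‖ = √2) : ‖((√2 : ℝ) : 𝕜)⁻¹ • v‖ = 1 := by
  rw [norm_smul, norm_inv, RCLike.norm_ofReal, abs_of_nonneg (Real.sqrt_nonneg 2), hv,
    inv_mul_cancel₀ (by positivity)]

theorem orthonormal_pair_inv_sqrt_two_smul_add_sub {e f : E} (he : ‖e‖ = 1) (hf : ‖f‖ = 1)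
    (hef : ⟪e, f⟫_𝕜 = 0) :
    ‖((√2 : ℝ) : 𝕜)⁻¹ • (e + f)‖ = 1 ∧ ‖((√2 : ℝ) : 𝕜)⁻¹ • (e - f)‖ = 1 ∧
      ⟪((√2 : ℝ) : 𝕜)⁻¹ • (e + f), ((√2 : ℝ) : 𝕜)⁻¹ • (e - f)⟫_𝕜 = 0 := by
  have hre : RCLike.re ⟪e, f⟫_𝕜 = 0 := by rw [hef, map_zero]
  refine ⟨norm_inv_sqrt_two_smul ?_, norm_inv_sqrt_two_smul ?_, ?_⟩
  · rw [← sq_eq_sq₀ (norm_nonneg _) (Real.sqrt_nonneg 2), @norm_add_sq 𝕜, he, hf, hre,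
      Real.sq_sqrt zero_le_two]
    norm_num
  · rw [← sq_eq_sq₀ (norm_nonneg _) (Real.sqrt_nonneg 2), @norm_sub_sq 𝕜, he, hf, hre,
      Real.sq_sqrt zero_le_two]
    norm_num
  · have hfe : ⟪f, e⟫_𝕜 = 0 := inner_eq_zero_symm.mp hef
    simp [inner_smul_left, inner_smul_right, inner_add_left, inner_sub_right,
      inner_self_eq_norm_sq_to_K, he, hf, hef, hfe]

theorem Submodule.exists_orthonormal_pair_of_two_le_finrank (K : Submodule 𝕜 E)
    (hK : 2 ≤ Module.finrank 𝕜 K) :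
    ∃ e ∈ K, ∃ f ∈ K, ‖e‖ = 1 ∧ ‖f‖ = 1 ∧ ⟪e, f⟫_𝕜 = 0 := by
  have := Module.finite_of_finrank_pos (by omega : 0 < Module.finrank 𝕜 K)
  let b := stdOrthonormalBasis 𝕜 K
  let i₀ : Fin (Module.finrank 𝕜 K) := ⟨0, by omega⟩
  let i₁ : Fin (Module.finrank 𝕜 K) := ⟨1, by omega⟩
  refine ⟨b i₀, (b i₀).2, b i₁, (b i₁).2, b.orthonormal.1 i₀, b.orthonormal.1 i₁, ?_⟩
  exact b.orthonormal.2 (by simp [i₀, i₁, Fin.ext_iff])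

end InnerProductSpace

namespace EuclideanSpace

variable {𝕜 ι : Type*} [RCLike 𝕜] [Fintype ι]

theorem inner_eq_sum_conj_mul (φ ψ : EuclideanSpace 𝕜 ι) :
    ⟪φ, ψ⟫_𝕜 = ∑ x, (starRingEnd 𝕜) (φ x) * ψ x := by
  simp [PiLp.inner_apply, mul_comm]

theorem sum_norm_sq_eq_one {v : EuclideanSpace 𝕜 ι} (hv : ‖v‖ = 1) : ∑ x, ‖v x‖ ^ 2 = 1 := by
  rw [← norm_sq_eq, hv, one_pow]

theorem one_sub_sum_norm_mul_norm_le_inv_sqrt_two_smul_add_sub {e f : EuclideanSpace 𝕜 ι}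
    (he : ‖e‖ = 1) (hf : ‖f‖ = 1) :
    1 - ∑ x, ‖e x‖ * ‖f x‖ ≤
      ∑ x, ‖(((√2 : ℝ) : 𝕜)⁻¹ • (e + f)) x‖ * ‖(((√2 : ℝ) : 𝕜)⁻¹ • (e - f)) x‖ := by
  have hc : ‖((√2 : ℝ) : 𝕜)⁻¹‖ ^ 2 = 1 / 2 := by
    rw [norm_inv, RCLike.norm_ofReal, abs_of_nonneg (Real.sqrt_nonneg 2), inv_pow,
      Real.sq_sqrt zero_le_two, one_div]
  calc 1 - ∑ x, ‖e x‖ * ‖f x‖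
      = 1 / 2 * ∑ x, (‖e x‖ - ‖f x‖) ^ 2 := by
        simp only [sub_sq, Finset.sum_add_distrib, Finset.sum_sub_distrib, ← Finset.mul_sum,
          mul_assoc, sum_norm_sq_eq_one he, sum_norm_sq_eq_one hf]
        ring
    _ ≤ 1 / 2 * ∑ x, ‖e x + f x‖ * ‖e x - f x‖ := by
        gcongr with x
        exact sq_norm_sub_norm_le_norm_add_mul_norm_sub _ _
    _ = _ := by
        simp only [PiLp.smul_apply, PiLp.add_apply, PiLp.sub_apply, norm_smul, ← hc,
          Finset.mul_sum]
        exact Finset.sum_congr rfl fun x _ => by ring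

theorem exists_orthonormal_pair_half_le_sum_norm_mul_norm
    (K : Submodule 𝕜 (EuclideanSpace 𝕜 ι)) (hK : 2 ≤ Module.finrank 𝕜 K) :
    ∃ φ ∈ K, ∃ ψ ∈ K, ‖φ‖ = 1 ∧ ‖ψ‖ = 1 ∧ ⟪φ, ψ⟫_𝕜 = 0 ∧
      1 / 2 ≤ ∑ x, ‖φ x‖ * ‖ψ x‖ := by
  obtain ⟨e, he, f, hf, he1, hf1, hef⟩ := K.exists_orthonormal_pair_of_two_le_finrank hK
  by_cases hbig : 1 / 2 ≤ ∑ x, ‖e x‖ * ‖f x‖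
  · exact ⟨e, he, f, hf, he1, hf1, hef, hbig⟩
  · obtain ⟨hu, hv, huv⟩ := orthonormal_pair_inv_sqrt_two_smul_add_sub he1 hf1 hef
    refine ⟨_, K.smul_mem _ (K.add_mem he hf), _, K.smul_mem _ (K.sub_mem he hf),
      hu, hv, huv, ?_⟩
    linarith [one_sub_sum_norm_mul_norm_le_inv_sqrt_two_smul_add_sub he1 hf1]

end EuclideanSpace

/-- any subspace `M ⊆ ℂ^N` of dimension at least 2 contains two
orthonormal vectors `φ, ψ` with `∑_x |φ(x)||ψ(x)| ≥ 1/2`. -/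
theorem stmt8 {N : Type*} [Fintype N] (M : Submodule ℂ (N → ℂ))
    (h2 : 2 ≤ Module.finrank ℂ M) :
    ∃ φ ∈ M, ∃ ψ ∈ M,
      (∑ x : N, (starRingEnd ℂ) (φ x) * φ x) = 1 ∧
      (∑ x : N, (starRingEnd ℂ) (ψ x) * ψ x) = 1 ∧
      (∑ x : N, (starRingEnd ℂ) (φ x) * ψ x) = 0 ∧
      (1 / 2 : ℝ) ≤ ∑ x : N, ‖φ x‖ * ‖ψ x‖ := by
  let K : Submodule ℂ (EuclideanSpace ℂ N) :=
    M.map ((WithLp.linearEquiv 2 ℂ (N → ℂ)).symm : (N → ℂ) →ₗ[ℂ] EuclideanSpace ℂ N)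
  have hK : 2 ≤ Module.finrank ℂ K := by rwa [LinearEquiv.finrank_map_eq]
  obtain ⟨φ, hφK, ψ, hψK, hφ, hψ, hφψ, hsum⟩ :=
    EuclideanSpace.exists_orthonormal_pair_half_le_sum_norm_mul_norm K hK
  have hunit {v : EuclideanSpace ℂ N} (hv : ‖v‖ = 1) :
      ∑ x, (starRingEnd ℂ) (v x) * v x = 1 := by
    rw [← EuclideanSpace.inner_eq_sum_conj_mul, inner_self_eq_norm_sq_to_K, hv]
    norm_num
  refine ⟨φ.ofLp, M.mem_map_equiv.mp hφK, ψ.ofLp, M.mem_map_equiv.mp hψK,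
    hunit hφ, hunit hψ, ?_, hsum⟩
  rw [← EuclideanSpace.inner_eq_sum_conj_mul, hφψ]
end
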